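/- arXiv:0704.3873 — 2 statements merged into one kernel-verified Lean document; each statement's English description precedes it below -/
import Mathlib

section
/- Let 0 < a < b. Then \int_a^b \frac{\ln x}{(x+a)(x+b)} dx = \frac{1}{b-a}\left[\ln(ab)\ln(a+b) - \ln 2 \, \ln(ab) - 2 \ln a \, \ln b\right] + \frac{1}{b-a}\left[\frac{\pi^2}{6} + \mathrm{Li}_2\left(-\frac{b}{a}\right) + \mathrm{Li}_2\left(-\frac{a}{b}\right)\right]. -/
/-!
For `c > 0`, differentiating shows that `log x * log (1 + x / c) + Li₂(-x / c)` is a primitive of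
`log x / (x + c)` on `x > 0`. Splitting `1 / ((x + a) (x + b))` into partial fractions, the
integral is therefore a combination of values of these primitives at `a` and `b`; the value
`Li₂(-1) = -π² / 12` needed to close the formula comes from integrating the power series of
`log (1 + t) / t` termwise and splitting `ζ(2) = π² / 6` into its even and odd parts.
-/

open Real MeasureTheory Set

/-- The dilogarithm evaluated at `-y`: `Li₂(-y) = -∫₀^y log(1+t)/t dt`. -/
noncomputable def Li2neg (y : ℝ) : ℝ := -∫ t in (0:ℝ)..y, Real.log (1 + t) / t

lemma norm_log_one_add_div_le_one {t : ℝ} (ht : 0 < t) : ‖log (1 + t) / t‖ ≤ 1 := by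
  rw [norm_eq_abs, abs_div, abs_of_pos ht, abs_of_nonneg (log_nonneg (by linarith)),
    div_le_one ht]
  linarith [log_le_sub_one_of_pos (by linarith : 0 < 1 + t)]

lemma measurable_log_one_add_div : Measurable fun t => log (1 + t) / t := by
  fun_prop

lemma intervalIntegrable_log_one_add_div {y : ℝ} (hy : 0 ≤ y) :
    IntervalIntegrable (fun t => log (1 + t) / t) volume 0 y := by
  rw [intervalIntegrable_iff_integrableOn_Ioc_of_le hy]
  refine Measure.integrableOn_of_bounded (M := 1) measure_Ioc_lt_top.ne
    measurable_log_one_add_div.aestronglyMeasurable ?_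
  filter_upwards [ae_restrict_mem measurableSet_Ioc] with t ht
  exact norm_log_one_add_div_le_one ht.1

lemma hasDerivAt_Li2neg {y : ℝ} (hy : 0 < y) :
    HasDerivAt Li2neg (-(log (1 + y) / y)) y := by
  have hcont : ContinuousAt (fun t => log (1 + t) / t) y :=
    ((continuousAt_log (by linarith)).comp (by fun_prop)).div continuousAt_id hy.ne'
  exact (intervalIntegral.integral_hasDerivAt_right (intervalIntegrable_log_one_add_div hy.le)
    ⟨univ, Filter.univ_mem, measurable_log_one_add_div.aestronglyMeasurable.restrict⟩ hcont).neg

lemma hasDerivAt_log_mul_log_one_add_div_add_Li2neg {c x : ℝ} (hc : 0 < c) (hx : 0 < x) :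
    HasDerivAt (fun x => log x * log (1 + x / c) + Li2neg (x / c)) (log x / (x + c)) x := by
  have hdiv : HasDerivAt (fun x => x / c) (1 / c) x := (hasDerivAt_id x).div_const c
  have h : HasDerivAt (fun x => log x * log (1 + x / c) + Li2neg (x / c)) _ x :=
    ((hasDerivAt_log hx.ne').mul ((hdiv.const_add 1).log (by positivity))).add
      ((hasDerivAt_Li2neg (by positivity)).comp x hdiv)
  refine h.congr_deriv ?_
  field_simp
  ring

lemma intervalIntegrable_log_div_add {a b c : ℝ} (ha : 0 < a) (hb : 0 < b) (hc : 0 < c) :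
    IntervalIntegrable (fun x => log x / (x + c)) volume a b := by
  have hpos : ∀ x ∈ uIcc a b, 0 < x := fun x hx => (lt_min ha hb).trans_le hx.1
  refine ContinuousOn.intervalIntegrable ?_
  exact (continuousOn_log.mono fun x hx => (hpos x hx).ne').div (by fun_prop)
    fun x hx => by linarith [hpos x hx]

lemma integral_log_div_add {a b c : ℝ} (ha : 0 < a) (hb : 0 < b) (hc : 0 < c) :
    ∫ x in a..b, log x / (x + c) =
      (log b * log (1 + b / c) + Li2neg (b / c)) - (log a * log (1 + a / c) + Li2neg (a / c)) :=
  intervalIntegral.integral_eq_sub_of_hasDerivAt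
    (fun _ hx => hasDerivAt_log_mul_log_one_add_div_add_Li2neg hc ((lt_min ha hb).trans_le hx.1))
    (intervalIntegrable_log_div_add ha hb hc)

lemma hasSum_log_one_add_div {t : ℝ} (ht : |t| < 1) (ht0 : t ≠ 0) :
    HasSum (fun n : ℕ => (-t) ^ n / (n + 1)) (log (1 + t) / t) := by
  have h := (hasSum_pow_div_log_of_abs_lt_one (x := -t) (by rwa [abs_neg])).div_const (-t)
  rw [sub_neg_eq_add, neg_div_neg_eq] at h
  refine h.congr_fun fun n => ?_
  field_simp
  ring

lemma hasSum_one_div_nat_add_one_sq :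
    HasSum (fun n : ℕ => 1 / ((n : ℝ) + 1) ^ 2) (π ^ 2 / 6) := by
  simpa using (hasSum_nat_add_iff' 1).mpr hasSum_zeta_two

lemma hasSum_Li2neg {y : ℝ} (hy0 : 0 ≤ y) (hy1 : y ≤ 1) :
    HasSum (fun n : ℕ => (-y) ^ (n + 1) / ((n : ℝ) + 1) ^ 2) (Li2neg y) := by
  have hIoo (f : ℝ → ℝ) : ∫ t in Ioo 0 y, f t = ∫ t in 0..y, f t := by
    rw [intervalIntegral.integral_of_le hy0, integral_Ioc_eq_integral_Ioo]
  set F : ℕ → ℝ → ℝ := fun n t => (-t) ^ n / (n + 1)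
  have hF_int (n : ℕ) : IntegrableOn (F n) (Ioo 0 y) :=
    (Continuous.integrableOn_Icc (by fun_prop)).mono_set Ioo_subset_Icc_self
  have hF_norm (n : ℕ) : ∫ t in Ioo 0 y, ‖F n t‖ = y ^ (n + 1) / ((n : ℝ) + 1) ^ 2 := by
    rw [setIntegral_congr_fun measurableSet_Ioo (g := fun t => t ^ n / ((n : ℝ) + 1))
      fun t ht => by simp [F, abs_of_pos ht.1, abs_of_pos (n.cast_add_one_pos (α := ℝ))],
      hIoo, intervalIntegral.integral_div, integral_pow]
    field_simp
    ring
  have hF_sum : Summable fun n => ∫ t in Ioo 0 y, ‖F n t‖ := by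
    simp_rw [hF_norm]
    exact hasSum_one_div_nat_add_one_sq.summable.of_nonneg_of_le (fun n => by positivity)
      fun n => div_le_div_of_nonneg_right (pow_le_one₀ hy0 hy1) (by positivity)
  have hF_val (n : ℕ) : ∫ t in Ioo 0 y, F n t = -((-y) ^ (n + 1) / ((n : ℝ) + 1) ^ 2) := by
    rw [hIoo, intervalIntegral.integral_div, intervalIntegral.integral_comp_neg (fun t => t ^ n),
      integral_pow]
    field_simp
    simp
  have hseries : ∫ t in Ioo 0 y, ∑' n, F n t = ∫ t in Ioo 0 y, log (1 + t) / t :=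
    setIntegral_congr_fun measurableSet_Ioo fun t ht =>
      (hasSum_log_one_add_div (by rw [abs_of_pos ht.1]; linarith [ht.2]) ht.1.ne').tsum_eq
  have h := (hasSum_integral_of_summable_integral_norm hF_int hF_sum).neg
  rw [hseries, hIoo] at h
  exact h.congr_fun fun n => by rw [hF_val, neg_neg]

lemma hasSum_neg_one_pow_succ_div_sq :
    HasSum (fun n : ℕ => (-1 : ℝ) ^ (n + 1) / ((n : ℝ) + 1) ^ 2) (-(π ^ 2 / 12)) := by
  set g : ℕ → ℝ := fun n => 1 / ((n : ℝ) + 1) ^ 2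
  have hodd : HasSum (fun k => g (2 * k + 1)) (1 / 4 * (π ^ 2 / 6)) := by
    refine (hasSum_one_div_nat_add_one_sq.mul_left (1 / 4)).congr_fun fun k => ?_
    simp only [g]
    push_cast
    field_simp
    ring
  have heven : HasSum (fun k => g (2 * k)) (∑' k, g (2 * k)) :=
    (hasSum_one_div_nat_add_one_sq.summable.comp_injective
      (mul_right_injective₀ two_ne_zero)).hasSum
  have hsplit := (heven.even_add_odd hodd).unique hasSum_one_div_nat_add_one_sq
  have halt : HasSum (fun n => (-1 : ℝ) ^ (n + 1) * g n)
      (-∑' k, g (2 * k) + 1 / 4 * (π ^ 2 / 6)) := by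
    refine HasSum.even_add_odd ?_ ?_
    · simpa [pow_succ, pow_mul] using heven.neg
    · simpa [pow_succ, pow_mul] using hodd
  convert halt.congr_fun fun n => ?_ using 1
  · linarith
  · simp [g, div_eq_mul_inv]

lemma Li2neg_one : Li2neg 1 = -(π ^ 2 / 12) :=
  (hasSum_Li2neg zero_le_one le_rfl).unique hasSum_neg_one_pow_succ_div_sq

theorem integral_log_div_shifted (a b : ℝ) (ha : 0 < a) (hab : a < b) :
    ∫ x in a..b, Real.log x / ((x + a) * (x + b)) =
      (1 / (b - a)) *
        (Real.log (a * b) * Real.log (a + b) - Real.log 2 * Real.log (a * b) -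
          2 * Real.log a * Real.log b) +
      (1 / (b - a)) * (Real.pi ^ 2 / 6 + Li2neg (b / a) + Li2neg (a / b)) := by
  have hb : 0 < b := ha.trans hab
  have hpartial : EqOn (fun x => log x / ((x + a) * (x + b)))
      (fun x => 1 / (b - a) * (log x / (x + a) - log x / (x + b))) (uIcc a b) := by
    intro x hx
    have hx0 : 0 < x := (lt_min ha hb).trans_le hx.1
    have hba : b - a ≠ 0 := by linarith
    field_simp
    ring
  rw [intervalIntegral.integral_congr hpartial, intervalIntegral.integral_const_mul,
    intervalIntegral.integral_sub (intervalIntegrable_log_div_add ha hb ha)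
      (intervalIntegrable_log_div_add ha hb hb),
    integral_log_div_add ha hb ha, integral_log_div_add ha hb hb,
    div_self ha.ne', div_self hb.ne', one_add_one_eq_two, Li2neg_one,
    one_add_div ha.ne', one_add_div hb.ne', log_div (by positivity) ha.ne',
    log_div (by positivity) hb.ne', log_mul ha.ne' hb.ne', add_comm b a]
  ring
end

section
/- For every integer n \ge 3 and every real b > 0, q_n(b) = \frac{n-2}{n-1}(1+b) q_{n-1}(b) + \frac{b \ln b}{n-1} - \frac{(1+b)\left[(1+b)^{n-2} - 1\right]}{(n-1)(n-2)}. -/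
/-!
Differentiating `t log t / (1+t)^m` and writing `t = (1+t) - 1` gives
`m h_{m+1} - (m-1) h_m = b log b / (1+b)^m - ∫₀^b (1+t)^{-m} dt` (the boundary term at `0`
vanishes since `t log t → 0`). The remaining integral is elementary, and multiplying the
relation for `m = n - 1` by `(1+b)^m / m` turns it into the recurrence for `q`.
-/

open Real

/-- `h n b = ∫₀^b log t / (1+t)^n dt`. -/
noncomputable def h (n : ℕ) (b : ℝ) : ℝ := ∫ t in (0:ℝ)..b, Real.log t / (1 + t) ^ n

/-- `q n b = (1+b)^(n-1) * h n b`. -/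
noncomputable def q (n : ℕ) (b : ℝ) : ℝ := (1 + b) ^ (n - 1) * h n b

open MeasureTheory intervalIntegral Set
open scoped Interval

theorem intervalIntegrable_log_div_one_add_pow (m : ℕ) {b : ℝ} (hb : 0 ≤ b) :
    IntervalIntegrable (fun t => log t / (1 + t) ^ m) volume 0 b := by
  simp_rw [div_eq_mul_inv]
  refine intervalIntegrable_log'.mul_continuousOn (ContinuousOn.inv₀ (by fun_prop) ?_)
  intro t ht
  rw [uIcc_of_le hb] at ht
  exact (pow_pos (by linarith [ht.1]) m).ne'

theorem hasDerivAt_mul_log_div_one_add_pow (m : ℕ) {t : ℝ} (ht : t ≠ 0) (ht' : 1 + t ≠ 0) :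
    HasDerivAt (fun t => t * log t / (1 + t) ^ m)
      (m * (log t / (1 + t) ^ (m + 1)) - (m - 1) * (log t / (1 + t) ^ m) + ((1 + t) ^ m)⁻¹)
      t := by
  have hpow := ((hasDerivAt_id' t).const_add 1).fun_pow m
  refine (((hasDerivAt_id' t).fun_mul (hasDerivAt_log ht)).fun_div hpow
    (pow_ne_zero m ht')).congr_deriv ?_
  rcases m with _ | m
  · simp [ht]
  · field_simp
    simp only [Nat.cast_add, Nat.cast_one, add_tsub_cancel_right]
    ring

theorem mul_h_succ_sub_mul_h (m : ℕ) {b : ℝ} (hb : 0 ≤ b) :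
    m * h (m + 1) b - (m - 1) * h m b =
      b * log b / (1 + b) ^ m - ∫ t in (0:ℝ)..b, ((1 + t) ^ m)⁻¹ := by
  have hcont : ContinuousOn (fun t => t * log t / (1 + t) ^ m) (Icc 0 b) :=
    continuous_mul_log.continuousOn.div (by fun_prop) fun t ht =>
      (pow_pos (by linarith [ht.1]) m).ne'
  have hinv : IntervalIntegrable (fun t : ℝ => ((1 + t) ^ m)⁻¹) volume 0 b := by
    refine ContinuousOn.intervalIntegrable (ContinuousOn.inv₀ (by fun_prop) fun t ht => ?_)
    rw [uIcc_of_le hb] at ht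
    exact (pow_pos (by linarith [ht.1]) m).ne'
  have hlog_succ := (intervalIntegrable_log_div_one_add_pow (m + 1) hb).const_mul (m : ℝ)
  have hlog := (intervalIntegrable_log_div_one_add_pow m hb).const_mul ((m : ℝ) - 1)
  have hftc := integral_eq_sub_of_hasDeriv_right_of_le hb hcont
    (fun t ht => (hasDerivAt_mul_log_div_one_add_pow m ht.1.ne'
      (by linarith [ht.1])).hasDerivWithinAt) ((hlog_succ.sub hlog).add hinv)
  rw [integral_add (hlog_succ.sub hlog) hinv, integral_sub hlog_succ hlog,
    intervalIntegral.integral_const_mul, intervalIntegral.integral_const_mul] at hftc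
  simp only [zero_mul, zero_div, sub_zero] at hftc
  rw [h, h, ← hftc]
  ring

theorem integral_inv_one_add_pow_succ {k : ℕ} (hk : k ≠ 0) {b : ℝ} (hb : -1 < b) :
    ∫ t in (0:ℝ)..b, ((1 + t) ^ (k + 1))⁻¹ = (1 - ((1 + b) ^ k)⁻¹) / k := by
  have hzero : (0:ℝ) ∉ [[1, 1 + b]] := by
    rw [mem_uIcc]
    rintro (⟨h1, -⟩ | ⟨h2, -⟩) <;> linarith
  have hexp : (-(k + 1 : ℤ)) ≠ -1 := by omega
  have hk' : (k : ℝ) ≠ 0 := by exact_mod_cast hk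
  rw [integral_comp_add_left (fun x => ((x ^ (k + 1))⁻¹ : ℝ)) 1, add_zero]
  simp only [← zpow_natCast, ← zpow_neg, Nat.cast_add, Nat.cast_one]
  rw [integral_zpow (Or.inr ⟨hexp, hzero⟩)]
  push_cast
  simp only [neg_add_rev, Int.reduceNeg, neg_add_cancel_comm, zpow_neg, zpow_natCast, one_pow,
    inv_one]
  field_simp
  ring

theorem q_recurrence (n : ℕ) (hn : 3 ≤ n) (b : ℝ) (hb : 0 < b) :
    q n b = ((n : ℝ) - 2) / ((n : ℝ) - 1) * (1 + b) * q (n - 1) b +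
      b * Real.log b / ((n : ℝ) - 1) -
      (1 + b) * ((1 + b) ^ (n - 2) - 1) / (((n : ℝ) - 1) * ((n : ℝ) - 2)) := by
  obtain ⟨k, rfl⟩ : ∃ k, n = k + 3 := ⟨n - 3, by omega⟩
  have hstep := mul_h_succ_sub_mul_h (k + 2) hb.le
  rw [integral_inv_one_add_pow_succ k.add_one_ne_zero (by linarith)] at hstep
  simp only [q, show k + 3 - 1 = k + 2 from rfl, show k + 3 - 2 = k + 1 from rfl,
    show k + 2 - 1 = k + 1 from rfl]
  push_cast at hstep ⊢
  rw [show (k : ℝ) + 3 - 1 = k + 2 by ring, show (k : ℝ) + 3 - 2 = k + 1 by ring]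
  rw [show (k : ℝ) + 2 - 1 = k + 1 by ring] at hstep
  have h1b : 0 < 1 + b := by linarith
  have hk1 : (k : ℝ) + 1 ≠ 0 := by positivity
  have hk2 : (k : ℝ) + 2 ≠ 0 := by positivity
  linear_combination (norm := skip) (1 + b) ^ (k + 2) / (k + 2) * hstep
  field_simp
  ring
end
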